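/- Let π be a generalized permutation of type (l,m) satisfying the convention. Then π admits a suspension data ζ with Im(Σ_{i=1}^{l} ζ_{π(i)}) = 0 if and only if π is strongly irreducible. -/

import Mathlib

open Finset

/-- A generalized permutation of type `(l, m)`: a map from positions `1, …, l + m`
(the top line being positions `1, …, l` and the bottom line positions `l+1, …, l+m`)
to an alphabet `A`, such that every letter has exactly two preimages. -/
structure GenPerm (A : Type*) [DecidableEq A] where
  l : ℕ
  m : ℕ
  p : ℕ → A
  double : ∀ a : A, ((Finset.Icc 1 (l + m)).filter (fun i => p i = a)).card = 2

namespace GenPerm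

variable {A : Type*} [DecidableEq A]

/-- Total number of positions, `l + m = 2d`. -/
def size (π : GenPerm A) : ℕ := π.l + π.m

/-- The multiset of letters occupying positions `a, a+1, …, b`. -/
def seg (π : GenPerm A) (a b : ℕ) : Multiset A :=
  (Finset.Icc a b).val.map π.p

/-- `i` and `j` are the two positions of a common letter (i.e. `j = σ(i)` where `σ` is the
fixed-point-free involution associated to `π`). -/
def IsTwin (π : GenPerm A) (i j : ℕ) : Prop :=
  1 ≤ i ∧ i ≤ π.size ∧ 1 ≤ j ∧ j ≤ π.size ∧ i ≠ j ∧ π.p i = π.p j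

/-- The convention: some letter has both occurrences on the top line, and some letter has
both occurrences on the bottom line. -/
def Convention (π : GenPerm A) : Prop :=
  (∃ i j, π.IsTwin i j ∧ i ≤ π.l ∧ j ≤ π.l) ∧
  (∃ i j, π.IsTwin i j ∧ π.l < i ∧ π.l < j)

/-- `π` is reducible: it admits a decomposition with corners `A∪B`, `D∪B`, `A∪C`, `D∪C`
(for disjoint, not all empty, subsets `A,B,C,D` of the alphabet) such that (i) no corner is
empty, or (ii) exactly one corner is empty and it is a left one, or (iii) exactly two corners
are empty and they are both left or both right. -/
def Reducible (π : GenPerm A) : Prop :=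
  ∃ (As Bs Cs Ds : Finset A) (i1 i2 i3 i4 : ℕ),
    Disjoint As Bs ∧ Disjoint As Cs ∧ Disjoint As Ds ∧
    Disjoint Bs Cs ∧ Disjoint Bs Ds ∧ Disjoint Cs Ds ∧
    ¬(As = ∅ ∧ Bs = ∅ ∧ Cs = ∅ ∧ Ds = ∅) ∧
    i1 ≤ i2 ∧ i2 ≤ π.l ∧ π.l ≤ i3 ∧ i3 ≤ i4 ∧ i4 ≤ π.size ∧
    π.seg 1 i1 = As.val + Bs.val ∧
    π.seg (i2 + 1) π.l = Ds.val + Bs.val ∧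
    π.seg (π.l + 1) i3 = As.val + Cs.val ∧
    π.seg (i4 + 1) π.size = Ds.val + Cs.val ∧
    ((π.seg 1 i1 ≠ 0 ∧ π.seg (i2 + 1) π.l ≠ 0 ∧ π.seg (π.l + 1) i3 ≠ 0 ∧
        π.seg (i4 + 1) π.size ≠ 0) ∨
     (π.seg 1 i1 = 0 ∧ π.seg (i2 + 1) π.l ≠ 0 ∧ π.seg (π.l + 1) i3 ≠ 0 ∧
        π.seg (i4 + 1) π.size ≠ 0) ∨
     (π.seg 1 i1 ≠ 0 ∧ π.seg (i2 + 1) π.l ≠ 0 ∧ π.seg (π.l + 1) i3 = 0 ∧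
        π.seg (i4 + 1) π.size ≠ 0) ∨
     (π.seg 1 i1 = 0 ∧ π.seg (i2 + 1) π.l ≠ 0 ∧ π.seg (π.l + 1) i3 = 0 ∧
        π.seg (i4 + 1) π.size ≠ 0) ∨
     (π.seg 1 i1 ≠ 0 ∧ π.seg (i2 + 1) π.l = 0 ∧ π.seg (π.l + 1) i3 ≠ 0 ∧
        π.seg (i4 + 1) π.size = 0))

/-- `π` is irreducible if it is not reducible. -/
def Irreducible (π : GenPerm A) : Prop := ¬ π.Reducible

/-- `π` is strongly irreducible if every decomposition with corners `A∪B`, `D∪B`, `A∪C`,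
`D∪C` (for disjoint subsets) has all four corners empty. -/
def StronglyIrreducible (π : GenPerm A) : Prop :=
  ∀ (As Bs Cs Ds : Finset A) (i1 i2 i3 i4 : ℕ),
    Disjoint As Bs → Disjoint As Cs → Disjoint As Ds →
    Disjoint Bs Cs → Disjoint Bs Ds → Disjoint Cs Ds →
    i1 ≤ i2 → i2 ≤ π.l → π.l ≤ i3 → i3 ≤ i4 → i4 ≤ π.size →
    π.seg 1 i1 = As.val + Bs.val →
    π.seg (i2 + 1) π.l = Ds.val + Bs.val →
    π.seg (π.l + 1) i3 = As.val + Cs.val →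
    π.seg (i4 + 1) π.size = Ds.val + Cs.val →
    (π.seg 1 i1 = 0 ∧ π.seg (i2 + 1) π.l = 0 ∧ π.seg (π.l + 1) i3 = 0 ∧
      π.seg (i4 + 1) π.size = 0)

/-- `Σ_{j=1}^{k} ζ_{π(j)}` (partial sum along the top line). -/
noncomputable def topSum (π : GenPerm A) (ζ : A → ℂ) (k : ℕ) : ℂ := ∑ j ∈ Finset.Icc 1 k, ζ (π.p j)

/-- `Σ_{j=1}^{k} ζ_{π(l+j)}` (partial sum along the bottom line). -/
noncomputable def botSum (π : GenPerm A) (ζ : A → ℂ) (k : ℕ) : ℂ := ∑ j ∈ Finset.Icc 1 k, ζ (π.p (π.l + j))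

/-- Real version of `topSum`. -/
noncomputable def topSumR (π : GenPerm A) (τ : A → ℝ) (k : ℕ) : ℝ := ∑ j ∈ Finset.Icc 1 k, τ (π.p j)

/-- Real version of `botSum`. -/
noncomputable def botSumR (π : GenPerm A) (τ : A → ℝ) (k : ℕ) : ℝ := ∑ j ∈ Finset.Icc 1 k, τ (π.p (π.l + j))

/-- `ζ` is a suspension data for `π`. -/
def IsSuspension (π : GenPerm A) (ζ : A → ℂ) : Prop :=
  (∀ a, 0 < (ζ a).re) ∧
  (∀ i, 1 ≤ i → i ≤ π.l - 1 → 0 < (π.topSum ζ i).im) ∧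
  (∀ i, 1 ≤ i → i ≤ π.m - 1 → (π.botSum ζ i).im < 0) ∧
  π.topSum ζ π.l = π.botSum ζ π.m

/-- `τ` is a pseudo-suspension for `π`. -/
def IsPseudoSusp (π : GenPerm A) (τ : A → ℝ) : Prop :=
  (∀ k, 1 ≤ k → k ≤ π.l → 0 ≤ π.topSumR τ k) ∧
  (∀ k, 1 ≤ k → k ≤ π.m → π.botSumR τ k ≤ 0) ∧
  π.topSumR τ π.l = 0 ∧ π.botSumR τ π.m = 0

/-- `τ` is a strict pseudo-suspension for `π`: all the inequalities are strict except the
extremal ones. -/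
def IsStrictPseudoSusp (π : GenPerm A) (τ : A → ℝ) : Prop :=
  π.IsPseudoSusp τ ∧
  (∀ k, 1 ≤ k → k ≤ π.l - 1 → 0 < π.topSumR τ k) ∧
  (∀ k, 1 ≤ k → k ≤ π.m - 1 → π.botSumR τ k < 0)

/-- Number of occurrences of the letter `a` on the top line; so `a ∈ 𝒜₀ ↔ topCount = 2`,
`a ∈ 𝒜₁ ↔ topCount = 0`, and `a ∈ 𝒜₀₁ ↔ topCount = 1`. -/
def topCount (π : GenPerm A) (a : A) : ℕ :=
  ((Finset.Icc 1 π.l).filter (fun i => π.p i = a)).card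

end GenPerm

/-!
Put `τ = Im ζ` and `S k = ∑_{j ≤ k} τ (π j)`, over all positions. A suspension datum with
`Im ∑_top ζ = 0` is the same as a strict pseudo-suspension `τ` together with positive real
parts that give both lines the same total weight. By the convention, such real parts always exist.

A strict pseudo-suspension forces strong irreducibility. Take a decomposition. Its corners have
`τ`-sums `S i₁`, `-S i₂`, `S i₃` and `-S i₄`, and `(A+B) - (D+B) - (A+C) + (D+C) = 0`. Here
`S ≥ 0` on the top line and `S ≤ 0` on the bottom one, so all four sums vanish. But `S` vanishes
only at the ends of each line, and the convention excludes the cases where a corner is a whole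
line.

For the converse, suppose there is no strict pseudo-suspension. The transposition theorem of
Stiemke–Motzkin then gives multipliers for the strict inequalities. They are nonnegative, not
all zero, and their combination lies in the span of the two equality constraints. Abel summation
turns them into antitone weights `g` on the top positions and `h` on the bottom positions, with
the same total over the occurrences of each letter. The positions where `g` (or `h`) is positive
form a prefix of the line, and those where it is negative form a suffix. The letters there make up
a decomposition with corners `A∪B`, `D∪B`, `A∪C` and `D∪C`: a letter occurring twice on the same
line lies in `B` or `C`, one occurring on both lines lies in `A` or `D`. Strong irreducibility
empties every corner. So the weights vanish, and with them the multipliers.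
-/

theorem Submodule.exists_nonneg_ne_zero_forall_sum_mul_eq_zero {K : Type*} [Fintype K]
    (W : Submodule ℝ (K → ℝ)) (hW : ∀ x ∈ W, ∃ j, x j ≤ 0) :
    ∃ y : K → ℝ, 0 ≤ y ∧ y ≠ 0 ∧ ∀ x ∈ W, ∑ j, y j * x j = 0 := by
  classical
  set S : Set (K → ℝ) := Set.univ.pi fun _ => Set.Ioi 0
  have hSW : Disjoint S W := Set.disjoint_left.2 fun x hxS hxW => by
    obtain ⟨j, hj⟩ := hW x hxW
    exact (hxS j (Set.mem_univ j)).not_ge hj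
  obtain ⟨φ, u, hφS, hφW⟩ := geometric_hahn_banach_open
    (convex_pi fun _ _ => convex_Ioi 0) (isOpen_set_pi Set.finite_univ fun _ _ => isOpen_Ioi)
    W.convex hSW
  have hu : u ≤ 0 := by simpa using hφW 0 W.zero_mem
  have hφW0 : ∀ x ∈ W, φ x = 0 := fun x hx => by
    by_contra hne
    have := hφW (((u - 1) / φ x) • x) (W.smul_mem _ hx)
    rw [map_smul, smul_eq_mul, div_mul_cancel₀ _ hne] at this
    linarith
  have hφS' : ∀ x ∈ closure S, φ x ≤ u :=
    closure_minimal (fun x hx => (hφS x hx).le) (isClosed_le φ.continuous continuous_const)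
  set e : K → K → ℝ := fun i j => if i = j then 1 else 0
  have hφ : ∀ x, φ x = ∑ j, x j * φ (e j) := fun x =>
    LinearMap.pi_apply_eq_sum_univ (φ : (K → ℝ) →ₗ[ℝ] ℝ) x
  refine ⟨fun j => -φ (e j), fun j => ?_, fun hy => ?_, fun x hx => ?_⟩
  · have : e j ∈ closure S := by
      rw [closure_pi_set, closure_Ioi]
      intro i _
      simp only [e, Set.mem_Ici]
      split_ifs <;> norm_num
    simpa using (hφS' _ this).trans hu
  · have h1 := hφS (fun _ => 1) fun _ _ => Set.mem_Ioi.2 one_pos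
    have h0 : ∀ j, φ (e j) = 0 := fun j => by simpa using congrFun hy j
    rw [hφ] at h1
    simp [h0] at h1
    linarith
  · simp only [neg_mul, Finset.sum_neg_distrib, neg_eq_zero]
    rw [← hφW0 x hx, hφ x]
    exact Finset.sum_congr rfl fun j _ => mul_comm _ _

theorem exists_nonneg_sum_smul_mem_span_of_not_exists_pos {ι κ E : Type*} [AddCommGroup E]
    [Module ℝ E] [Finite κ] (s : Finset ι) (f : ι → E →ₗ[ℝ] ℝ) (L : κ → E →ₗ[ℝ] ℝ)
    (h : ¬∃ x, (∀ j, L j x = 0) ∧ ∀ i ∈ s, 0 < f i x) :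
    ∃ y : ι → ℝ, (∀ i, 0 ≤ y i) ∧ (∃ i ∈ s, y i ≠ 0) ∧
      ∑ i ∈ s, y i • f i ∈ Submodule.span ℝ (Set.range L) := by
  classical
  set F : E →ₗ[ℝ] s → ℝ := LinearMap.pi fun i => f i
  set V : Submodule ℝ E := ⨅ j, LinearMap.ker (L j)
  obtain ⟨y, hy0, hy, hyW⟩ := (V.map F).exists_nonneg_ne_zero_forall_sum_mul_eq_zero <| by
    rintro _ ⟨x, hx, rfl⟩
    by_contra! hpos
    exact h ⟨x, fun j => (Submodule.mem_iInf _).1 hx j, fun i hi => hpos ⟨i, hi⟩⟩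
  refine ⟨fun i => if hi : i ∈ s then y ⟨i, hi⟩ else 0, fun i => ?_, ?_, ?_⟩
  · dsimp only
    split_ifs
    exacts [hy0 _, le_rfl]
  · by_contra! hzero
    exact hy (funext fun i => by simpa [i.2] using hzero i i.2)
  · have hsum : ∑ i ∈ s, (if hi : i ∈ s then y ⟨i, hi⟩ else 0) • f i = ∑ i : s, y i • f i := by
      rw [← Finset.sum_coe_sort s]
      exact Finset.sum_congr rfl fun i _ => by simp [i.2]
    rw [hsum]
    refine mem_span_of_iInf_ker_le_ker fun x hx => ?_
    simpa [F] using hyW (F x) ⟨x, hx, rfl⟩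

theorem sum_Icc_mul_sum_Ioc_eq_sum_Ioc_sum_Icc_mul (c u : ℕ → ℝ) (a : ℕ) {n N : ℕ}
    (hnN : n ≤ N) :
    ∑ k ∈ Icc 1 n, c k * ∑ p ∈ Ioc a (a + k), u p =
      ∑ p ∈ Ioc a (a + N), (∑ k ∈ Icc (p - a) n, c k) * u p := by
  simp_rw [Finset.mul_sum, Finset.sum_mul]
  exact Finset.sum_comm' fun k p => by simp only [mem_Icc, mem_Ioc]; omega

theorem antitone_sum_Icc {c : ℕ → ℝ} (hc : ∀ k, 0 ≤ c k) (n : ℕ) :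
    Antitone fun p => ∑ k ∈ Icc p n, c k := fun _ _ hpq =>
  Finset.sum_le_sum_of_subset_of_nonneg (Icc_subset_Icc_left hpq) fun k _ _ => hc k

theorem sum_Icc_sub_sum_Icc_add_one (c : ℕ → ℝ) {k n : ℕ} (hkn : k ≤ n) :
    ∑ j ∈ Icc k n, c j - ∑ j ∈ Icc (k + 1) n, c j = c k := by
  rw [← add_sum_Ioc_eq_sum_Icc hkn, Icc_add_one_left_eq_Ioc, add_sub_cancel_right]

theorem exists_filter_Ioc_eq_Ioc {P : ℕ → Prop} [DecidablePred P]
    (hP : ∀ p q, p ≤ q → P q → P p) {a b : ℕ} (hab : a ≤ b) :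
    ∃ i, a ≤ i ∧ i ≤ b ∧ (Ioc a b).filter P = Ioc a i := by
  induction b, hab using Nat.le_induction with
  | base => exact ⟨a, le_rfl, le_rfl, by simp⟩
  | succ b hab ih =>
    obtain ⟨i, hai, hib, hi⟩ := ih
    by_cases hb : P (b + 1)
    · exact ⟨b + 1, by omega, le_rfl, filter_true_of_mem fun p hp => hP p _ (mem_Ioc.1 hp).2 hb⟩
    · refine ⟨i, hai, by omega, ?_⟩
      rw [← insert_Ioc_right_eq_Ioc_add_one hab, filter_insert, if_neg hb, hi]

theorem Antitone.exists_filter_pos_eq_Ioc_and_filter_neg_eq_Ioc {w : ℕ → ℝ} (hw : Antitone w)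
    {a b : ℕ} (hab : a ≤ b) : ∃ i j, a ≤ i ∧ i ≤ j ∧ j ≤ b ∧
      (Ioc a b).filter (0 < w ·) = Ioc a i ∧ (Ioc a b).filter (w · < 0) = Ioc j b := by
  obtain ⟨i, hai, hib, hi⟩ :=
    exists_filter_Ioc_eq_Ioc (P := (0 < w ·)) (fun p q hpq hq => hq.trans_le (hw hpq)) hab
  obtain ⟨j, haj, hjb, hj⟩ :=
    exists_filter_Ioc_eq_Ioc (P := fun p => ¬w p < 0)
      (fun p q hpq hq => not_lt.2 ((not_lt.1 hq).trans (hw hpq))) hab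
  have hneg : (Ioc a b).filter (w · < 0) = Ioc j b := by
    ext p
    have hp := congrArg (p ∈ ·) hj
    simp only [mem_filter, mem_Ioc, eq_iff_iff, not_lt] at hp ⊢
    constructor
    · rintro ⟨⟨hap, hpb⟩, hwp⟩
      exact ⟨lt_of_not_ge fun hpj => hwp.not_ge (hp.2 ⟨hap, hpj⟩).2, hpb⟩
    · rintro ⟨hjp, hpb⟩
      refine ⟨⟨by omega, hpb⟩, lt_of_not_ge fun hwp => ?_⟩
      have := (hp.1 ⟨⟨by omega, hpb⟩, hwp⟩).2
      omega
  refine ⟨i, j, hai, ?_, hjb, hi, hneg⟩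
  by_contra! hji
  have hpos : i ∈ (Ioc a b).filter (0 < w ·) := hi ▸ mem_Ioc.2 ⟨by omega, le_rfl⟩
  have hneg' : i ∈ (Ioc a b).filter (w · < 0) := hneg ▸ mem_Ioc.2 ⟨hji, hib⟩
  exact (mem_filter.1 hpos).2.not_gt (mem_filter.1 hneg').2

theorem exists_pos_or_exists_neg_iff_of_sum_eq {ι κ : Type*} {s : Finset ι} {t : Finset κ}
    {f : ι → ℝ} {g : κ → ℝ} (h : ∑ i ∈ s, f i = ∑ j ∈ t, g j) :
    ((∃ i ∈ s, 0 < f i) ∨ ∃ j ∈ t, g j < 0) ↔ (∃ i ∈ s, f i < 0) ∨ ∃ j ∈ t, 0 < g j := by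
  have key : ∀ (f : ι → ℝ) (g : κ → ℝ), ∑ i ∈ s, f i = ∑ j ∈ t, g j →
      ((∃ i ∈ s, 0 < f i) ∨ ∃ j ∈ t, g j < 0) → (∃ i ∈ s, f i < 0) ∨ ∃ j ∈ t, 0 < g j := by
    intro f g h hpos
    by_contra! hle
    have hf := Finset.sum_nonneg hle.1
    have hg := Finset.sum_nonpos hle.2
    rcases hpos with hf' | hg'
    · linarith [Finset.sum_pos' hle.1 hf']
    · linarith [Finset.sum_neg' hle.2 hg']
  refine ⟨key f g h, fun h' => ?_⟩
  simpa using key (-f) (-g) (by simp [h]) (by simpa using h')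

theorem Multiset.map_filter_add_map_filter_le {β γ : Type*} (f : β → γ) (s : Multiset β)
    {P Q : β → Prop} [DecidablePred P] [DecidablePred Q] (hPQ : ∀ b, P b → ¬Q b) :
    (s.filter P).map f + (s.filter Q).map f ≤ s.map f := by
  rw [← Multiset.map_add, Multiset.filter_add_filter,
    Multiset.filter_eq_nil.2 (fun b _ hb => hPQ b hb.1 hb.2 : ∀ b ∈ s, ¬(P b ∧ Q b)), add_zero]
  exact Multiset.map_le_map (Multiset.filter_le _ _)

theorem Multiset.exists_corner_decomposition {α : Type*} [DecidableEq α]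
    (P₁ N₁ P₂ N₂ : Multiset α) (hcount : ∀ x, (P₁ + N₁ + P₂ + N₂).count x ≤ 2)
    (hsign : ∀ x, x ∈ P₁ ∨ x ∈ N₂ ↔ x ∈ N₁ ∨ x ∈ P₂) :
    ∃ As Bs Cs Ds : Finset α,
      Disjoint As Bs ∧ Disjoint As Cs ∧ Disjoint As Ds ∧
      Disjoint Bs Cs ∧ Disjoint Bs Ds ∧ Disjoint Cs Ds ∧
      P₁ = As.val + Bs.val ∧ N₁ = Ds.val + Bs.val ∧
      P₂ = As.val + Cs.val ∧ N₂ = Ds.val + Cs.val := by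
  have hcount' : ∀ x, P₁.count x + N₁.count x + P₂.count x + N₂.count x ≤ 2 := by
    simpa only [Multiset.count_add] using hcount
  have hsign' : ∀ x, (0 < P₁.count x ∨ 0 < N₂.count x ↔ 0 < N₁.count x ∨ 0 < P₂.count x) := by
    simpa only [Multiset.count_pos] using hsign
  have hval : ∀ (s : Finset α) x, s.val.count x = if x ∈ s then 1 else 0 :=
    fun s _ => Multiset.count_eq_of_nodup s.nodup
  refine ⟨P₁.toFinset ∩ P₂.toFinset, P₁.toFinset ∩ N₁.toFinset, P₂.toFinset ∩ N₂.toFinset,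
    N₁.toFinset ∩ N₂.toFinset, ?_, ?_, ?_, ?_, ?_, ?_, ?_, ?_, ?_, ?_⟩
  -- a letter in two of the four sets would occur at least three times
  iterate 6
    rw [Finset.disjoint_left]
    intro x hx hx'
    simp only [Finset.mem_inter, Multiset.mem_toFinset, ← Multiset.count_pos] at hx hx'
    have := hcount' x
    omega
  all_goals
    ext x
    simp only [Multiset.count_add, hval]
    simp only [Finset.mem_inter, Multiset.mem_toFinset, ← Multiset.count_pos]
    have := hcount' x
    have := hsign' x
    split_ifs <;> omega

namespace GenPerm

variable {A : Type*} [DecidableEq A]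

section Positions

variable (π : GenPerm A)

theorem seg_add_one (a b : ℕ) : π.seg (a + 1) b = (Ioc a b).val.map π.p := by
  rw [seg, Icc_add_one_left_eq_Ioc]

theorem seg_add_one_self (a : ℕ) : π.seg (a + 1) a = 0 := by
  simp [seg_add_one]

theorem topSumR_eq_sum_Ioc (τ : A → ℝ) (k : ℕ) :
    π.topSumR τ k = ∑ p ∈ Ioc 0 k, τ (π.p p) := by
  rw [topSumR, ← Icc_add_one_left_eq_Ioc]
  rfl

theorem botSumR_eq_sum_Ioc (τ : A → ℝ) (k : ℕ) :
    π.botSumR τ k = ∑ p ∈ Ioc π.l (π.l + k), τ (π.p p) := by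
  rw [botSumR, ← Icc_add_one_left_eq_Ioc, ← map_add_left_Icc, sum_map]
  rfl

theorem topSumR_add_botSumR (τ : A → ℝ) (k : ℕ) :
    π.topSumR τ π.l + π.botSumR τ k = π.topSumR τ (π.l + k) := by
  rw [topSumR_eq_sum_Ioc, topSumR_eq_sum_Ioc, botSumR_eq_sum_Ioc,
    sum_Ioc_consecutive _ (Nat.zero_le _) (Nat.le_add_right _ _)]

theorem sum_map_seg_add_one (τ : A → ℝ) {a b : ℕ} (hab : a ≤ b) :
    ((π.seg (a + 1) b).map τ).sum = π.topSumR τ b - π.topSumR τ a := by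
  rw [seg_add_one, Multiset.map_map, topSumR_eq_sum_Ioc, topSumR_eq_sum_Ioc,
    ← sum_Ioc_consecutive _ (Nat.zero_le a) hab, add_sub_cancel_left]
  rfl

theorem count_map_val (S : Finset ℕ) (x : A) :
    (S.val.map π.p).count x = #{p ∈ S | π.p p = x} := by
  rw [Multiset.count_map, card_def, filter_val]
  simp_rw [eq_comm]

theorem card_filter_Ioc_add_card_filter_Ioc (x : A) :
    #{p ∈ Ioc 0 π.l | π.p p = x} + #{p ∈ Ioc π.l π.size | π.p p = x} = 2 := by
  rw [← card_union_of_disjoint (disjoint_filter_filter (Ioc_disjoint_Ioc_of_le le_rfl)),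
    ← filter_union, size, Ioc_union_Ioc_eq_Ioc (Nat.zero_le _) (Nat.le_add_right _ _),
    ← Icc_add_one_left_eq_Ioc]
  exact π.double x

theorem count_map_filter_add_map_filter_le (S : Finset ℕ) {P Q : ℕ → Prop} [DecidablePred P]
    [DecidablePred Q] (hPQ : ∀ p, P p → ¬Q p) (x : A) :
    ((S.filter P).val.map π.p + (S.filter Q).val.map π.p).count x ≤ #{p ∈ S | π.p p = x} := by
  rw [← count_map_val]
  exact Multiset.count_le_of_le x (Multiset.map_filter_add_map_filter_le π.p _ hPQ)

def sumₗ (S : Finset ℕ) : (A → ℝ) →ₗ[ℝ] ℝ :=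
  ∑ p ∈ S, LinearMap.proj (π.p p)

@[simp]
theorem sumₗ_apply (S : Finset ℕ) (τ : A → ℝ) : π.sumₗ S τ = ∑ p ∈ S, τ (π.p p) := by
  simp [sumₗ]

end Positions

variable {π : GenPerm A}

theorem IsTwin.two_le_card_filter {i j : ℕ} (hij : π.IsTwin i j) {S : Finset ℕ} (hi : i ∈ S)
    (hj : j ∈ S) : 2 ≤ #{p ∈ S | π.p p = π.p i} := by
  obtain ⟨-, -, -, -, hne, heq⟩ := hij
  rw [← card_pair hne]
  refine card_le_card fun p hp => ?_
  rcases mem_insert.1 hp with rfl | hp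
  · exact mem_filter.2 ⟨hi, rfl⟩
  · exact mem_filter.2 ⟨(mem_singleton.1 hp) ▸ hj, (mem_singleton.1 hp) ▸ heq.symm⟩

theorem IsTwin.seg_ne_add {i j a b : ℕ} (hij : π.IsTwin i j) (hi : i ∈ Icc a b)
    (hj : j ∈ Icc a b) {Xs Ys : Finset A} (hXY : Disjoint Xs Ys) :
    π.seg a b ≠ Xs.val + Ys.val := by
  intro h
  have hnodup : (π.seg a b).Nodup := h ▸ (Xs.disjUnion Ys hXY).nodup
  exact hij.2.2.2.2.1 (Multiset.inj_on_of_nodup_map hnodup i hi j hj hij.2.2.2.2.2)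

theorem Convention.exists_pos_topSumR_eq_botSumR (hconv : π.Convention) :
    ∃ w : A → ℝ, (∀ a, 0 < w a) ∧ π.topSumR w π.l = π.botSumR w π.m := by
  obtain ⟨⟨it, jt, htw, hit, hjt⟩, ⟨ib, jb, hbw, hib, hjb⟩⟩ := hconv
  have hα := htw.two_le_card_filter (S := Ioc 0 π.l) (mem_Ioc.2 ⟨htw.1, hit⟩)
    (mem_Ioc.2 ⟨htw.2.2.1, hjt⟩)
  have hβ := hbw.two_le_card_filter (S := Ioc π.l π.size) (mem_Ioc.2 ⟨hib, hbw.2.1⟩)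
    (mem_Ioc.2 ⟨hjb, hbw.2.2.2.1⟩)
  have cα := π.card_filter_Ioc_add_card_filter_Ioc (π.p it)
  have cβ := π.card_filter_Ioc_add_card_filter_Ioc (π.p ib)
  -- `π.p it` occurs twice on the top line and `π.p ib` twice on the bottom line, so with these
  -- weights both lines weigh `2 (l + m)`
  set w : A → ℝ := fun x => 2 + (if x = π.p it then (π.m : ℝ) else 0) +
    (if x = π.p ib then (π.l : ℝ) else 0)
  have hw : ∀ S : Finset ℕ, ∑ p ∈ S, w (π.p p) =
      2 * #S + π.m * #{p ∈ S | π.p p = π.p it} + π.l * #{p ∈ S | π.p p = π.p ib} := by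
    intro S
    simp [w, sum_add_distrib, sum_ite, mul_comm]
  refine ⟨w, fun x => by simp only [w]; split_ifs <;> positivity, ?_⟩
  rw [topSumR_eq_sum_Ioc, botSumR_eq_sum_Ioc, hw, hw, Nat.card_Ioc, Nat.card_Ioc,
    show #{p ∈ Ioc 0 π.l | π.p p = π.p it} = 2 by omega,
    show #{p ∈ Ioc 0 π.l | π.p p = π.p ib} = 0 by omega,
    show #{p ∈ Ioc π.l (π.l + π.m) | π.p p = π.p it} = 0 by simp only [size] at cα; omega,
    show #{p ∈ Ioc π.l (π.l + π.m) | π.p p = π.p ib} = 2 by simp only [size] at hβ cβ; omega]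
  simp only [Nat.sub_zero, Nat.add_sub_cancel_left]
  ring

theorem isStrictPseudoSusp_iff {τ : A → ℝ} : π.IsStrictPseudoSusp τ ↔
    (∀ k, 1 ≤ k → k ≤ π.l - 1 → 0 < π.topSumR τ k) ∧
    (∀ k, 1 ≤ k → k ≤ π.m - 1 → π.botSumR τ k < 0) ∧
    π.topSumR τ π.l = 0 ∧ π.botSumR τ π.m = 0 := by
  refine ⟨fun ⟨⟨_, _, hl, hm⟩, htop, hbot⟩ => ⟨htop, hbot, hl, hm⟩,
    fun ⟨htop, hbot, hl, hm⟩ => ⟨⟨fun k h1 hk => ?_, fun k h1 hk => ?_, hl, hm⟩, htop, hbot⟩⟩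
  · rcases (by omega : k ≤ π.l - 1 ∨ k = π.l) with hk | rfl
    exacts [(htop k h1 hk).le, hl.ge]
  · rcases (by omega : k ≤ π.m - 1 ∨ k = π.m) with hk | rfl
    exacts [(hbot k h1 hk).le, hm.le]

theorem im_topSum (ζ : A → ℂ) (k : ℕ) :
    (π.topSum ζ k).im = π.topSumR (fun a => (ζ a).im) k :=
  Complex.im_sum _ _

theorem re_topSum (ζ : A → ℂ) (k : ℕ) :
    (π.topSum ζ k).re = π.topSumR (fun a => (ζ a).re) k :=
  Complex.re_sum _ _

theorem im_botSum (ζ : A → ℂ) (k : ℕ) :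
    (π.botSum ζ k).im = π.botSumR (fun a => (ζ a).im) k :=
  Complex.im_sum _ _

theorem re_botSum (ζ : A → ℂ) (k : ℕ) :
    (π.botSum ζ k).re = π.botSumR (fun a => (ζ a).re) k :=
  Complex.re_sum _ _

theorem IsSuspension.isStrictPseudoSusp_im {ζ : A → ℂ} (hζ : π.IsSuspension ζ)
    (him : (π.topSum ζ π.l).im = 0) : π.IsStrictPseudoSusp fun a => (ζ a).im := by
  obtain ⟨-, htop, hbot, heq⟩ := hζ
  refine isStrictPseudoSusp_iff.2 ⟨fun k h1 hk => ?_, fun k h1 hk => ?_, ?_, ?_⟩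
  · simpa only [im_topSum] using htop k h1 hk
  · simpa only [im_botSum] using hbot k h1 hk
  · rwa [← im_topSum]
  · rwa [← im_botSum, ← heq]

theorem IsStrictPseudoSusp.exists_isSuspension (hconv : π.Convention) {τ : A → ℝ}
    (hτ : π.IsStrictPseudoSusp τ) :
    ∃ ζ : A → ℂ, π.IsSuspension ζ ∧ (π.topSum ζ π.l).im = 0 := by
  obtain ⟨htop, hbot, hl, hm⟩ := isStrictPseudoSusp_iff.1 hτ
  obtain ⟨w, hw, hweq⟩ := hconv.exists_pos_topSumR_eq_botSumR
  refine ⟨fun a => ⟨w a, τ a⟩, ⟨hw, ?_, ?_, Complex.ext ?_ ?_⟩, ?_⟩ <;>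
    simp only [re_topSum, im_topSum, re_botSum, im_botSum]
  exacts [htop, hbot, hweq, hl.trans hm.symm, hl]

theorem IsStrictPseudoSusp.topSumR_nonneg_and_eq_zero_iff {τ : A → ℝ}
    (hτ : π.IsStrictPseudoSusp τ) {k : ℕ} (hk : k ≤ π.l) :
    0 ≤ π.topSumR τ k ∧ (π.topSumR τ k = 0 ↔ k = 0 ∨ k = π.l) := by
  obtain ⟨htop, -, hl, -⟩ := isStrictPseudoSusp_iff.1 hτ
  rcases (by omega : k = 0 ∨ k = π.l ∨ (1 ≤ k ∧ k ≤ π.l - 1)) with rfl | rfl | ⟨h1, hk'⟩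
  · simp [topSumR]
  · simp [hl]
  · have := htop k h1 hk'
    exact ⟨this.le, by constructor <;> intro h <;> [linarith; omega]⟩

theorem IsStrictPseudoSusp.topSumR_nonpos_and_eq_zero_iff {τ : A → ℝ}
    (hτ : π.IsStrictPseudoSusp τ) {k : ℕ} (hlk : π.l ≤ k) (hk : k ≤ π.size) :
    π.topSumR τ k ≤ 0 ∧ (π.topSumR τ k = 0 ↔ k = π.l ∨ k = π.size) := by
  obtain ⟨-, hbot, hl, hm⟩ := isStrictPseudoSusp_iff.1 hτ
  obtain ⟨j, rfl⟩ := Nat.exists_eq_add_of_le hlk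
  rw [← π.topSumR_add_botSumR, hl, zero_add]
  rcases (by simp only [size] at hk; omega : j = 0 ∨ j = π.m ∨ (1 ≤ j ∧ j ≤ π.m - 1))
    with rfl | rfl | ⟨h1, hj⟩
  · simp [botSumR]
  · simp [hm, size]
  · have := hbot j h1 hj
    exact ⟨this.le, by constructor <;> intro h <;> [linarith; (simp only [size] at h; omega)]⟩

theorem IsStrictPseudoSusp.stronglyIrreducible (hconv : π.Convention) {τ : A → ℝ}
    (hτ : π.IsStrictPseudoSusp τ) : π.StronglyIrreducible := by
  obtain ⟨⟨it, jt, htw, hit, hjt⟩, ⟨ib, jb, hbw, hib, hjb⟩⟩ := hconv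
  have htop : ∀ {Xs Ys : Finset A}, Disjoint Xs Ys → π.seg 1 π.l ≠ Xs.val + Ys.val :=
    htw.seg_ne_add (mem_Icc.2 ⟨htw.1, hit⟩) (mem_Icc.2 ⟨htw.2.2.1, hjt⟩)
  have hbot : ∀ {Xs Ys : Finset A}, Disjoint Xs Ys →
      π.seg (π.l + 1) π.size ≠ Xs.val + Ys.val :=
    hbw.seg_ne_add (mem_Icc.2 ⟨hib, hbw.2.1⟩) (mem_Icc.2 ⟨hjb, hbw.2.2.2.1⟩)
  intro As Bs Cs Ds i1 i2 i3 i4 hAB hAC hAD hBC hBD hCD h12 h2l hl3 h34 h4 e1 e2 e3 e4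
  have c1 := π.sum_map_seg_add_one τ (Nat.zero_le i1)
  have c2 := π.sum_map_seg_add_one τ h2l
  have c3 := π.sum_map_seg_add_one τ hl3
  have c4 := π.sum_map_seg_add_one τ h4
  simp only [zero_add, e1, e2, e3, e4, Multiset.map_add, Multiset.sum_add] at c1 c2 c3 c4
  obtain ⟨n1, z1⟩ := hτ.topSumR_nonneg_and_eq_zero_iff (k := i1) (by omega)
  obtain ⟨n2, z2⟩ := hτ.topSumR_nonneg_and_eq_zero_iff h2l
  obtain ⟨n3, z3⟩ := hτ.topSumR_nonpos_and_eq_zero_iff hl3 (by omega)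
  obtain ⟨n4, z4⟩ := hτ.topSumR_nonpos_and_eq_zero_iff (by omega) h4
  have s0 := (hτ.topSumR_nonneg_and_eq_zero_iff (Nat.zero_le _)).2.2 (Or.inl rfl)
  have sl := (hτ.topSumR_nonneg_and_eq_zero_iff le_rfl).2.2 (Or.inr rfl)
  have ss := (hτ.topSumR_nonpos_and_eq_zero_iff (k := π.size) (Nat.le_add_right _ _)
    le_rfl).2.2 (Or.inr rfl)
  -- with `S = π.topSumR τ`, `c1 - c2 - c3 + c4` reads `S i1 + S i2 = S i3 + S i4`, and
  -- `S i1, S i2 ≥ 0 ≥ S i3, S i4`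
  rcases z1.1 (by linarith) with rfl | rfl
  · rcases z2.1 (by linarith) with rfl | rfl
    · exact absurd (by simpa using e2) (htop hBD.symm)
    rcases z3.1 (by linarith) with rfl | rfl
    · rcases z4.1 (by linarith) with rfl | rfl
      · exact absurd (by simpa using e4) (hbot hCD.symm)
      exact ⟨π.seg_add_one_self 0, π.seg_add_one_self _, π.seg_add_one_self _,
        π.seg_add_one_self _⟩
    · exact absurd e3 (hbot hAC)
  · exact absurd e1 (htop hAB)

theorem StronglyIrreducible.eq_zero_of_antitone (hSI : π.StronglyIrreducible) {g h : ℕ → ℝ}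
    (hg : Antitone g) (hh : Antitone h)
    (hgh : ∀ τ : A → ℝ,
      ∑ p ∈ Ioc 0 π.l, g p * τ (π.p p) = ∑ p ∈ Ioc π.l π.size, h p * τ (π.p p)) :
    (∀ p ∈ Ioc 0 π.l, g p = 0) ∧ ∀ p ∈ Ioc π.l π.size, h p = 0 := by
  obtain ⟨i1, i2, -, h12, h2l, hi1, hi2⟩ :=
    hg.exists_filter_pos_eq_Ioc_and_filter_neg_eq_Ioc (Nat.zero_le π.l)
  obtain ⟨i3, i4, hl3, h34, h4, hi3, hi4⟩ :=
    hh.exists_filter_pos_eq_Ioc_and_filter_neg_eq_Ioc (show π.l ≤ π.size from Nat.le_add_right _ _)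
  set P₁ := ((Ioc 0 π.l).filter (0 < g ·)).val.map π.p
  set N₁ := ((Ioc 0 π.l).filter (g · < 0)).val.map π.p
  set P₂ := ((Ioc π.l π.size).filter (0 < h ·)).val.map π.p
  set N₂ := ((Ioc π.l π.size).filter (h · < 0)).val.map π.p
  have hcount : ∀ x, (P₁ + N₁ + P₂ + N₂).count x ≤ 2 := fun x => by
    have htop : (P₁ + N₁).count x ≤ _ :=
      π.count_map_filter_add_map_filter_le _ (fun _ h1 h2 => h1.not_gt h2) x
    have hbot : (P₂ + N₂).count x ≤ _ :=
      π.count_map_filter_add_map_filter_le _ (fun _ h1 h2 => h1.not_gt h2) x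
    have := π.card_filter_Ioc_add_card_filter_Ioc x
    simp only [Multiset.count_add] at htop hbot ⊢
    omega
  have hsign : ∀ x, x ∈ P₁ ∨ x ∈ N₂ ↔ x ∈ N₁ ∨ x ∈ P₂ := fun x => by
    have := hgh fun y => if y = x then 1 else 0
    simp only [mul_ite, mul_one, mul_zero, ← sum_filter] at this
    simpa [P₁, N₁, P₂, N₂, and_assoc, and_comm, and_left_comm] using
      exists_pos_or_exists_neg_iff_of_sum_eq this
  obtain ⟨As, Bs, Cs, Ds, hAB, hAC, hAD, hBC, hBD, hCD, e1, e2, e3, e4⟩ :=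
    Multiset.exists_corner_decomposition P₁ N₁ P₂ N₂ hcount hsign
  have s1 : π.seg 1 i1 = P₁ := by simp only [P₁, hi1]; exact π.seg_add_one 0 i1
  have s2 : π.seg (i2 + 1) π.l = N₁ := by simp only [N₁, hi2]; exact π.seg_add_one _ _
  have s3 : π.seg (π.l + 1) i3 = P₂ := by simp only [P₂, hi3]; exact π.seg_add_one _ _
  have s4 : π.seg (i4 + 1) π.size = N₂ := by simp only [N₂, hi4]; exact π.seg_add_one _ _
  obtain ⟨z1, z2, z3, z4⟩ := hSI As Bs Cs Ds i1 i2 i3 i4 hAB hAC hAD hBC hBD hCD h12 h2l hl3 h34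
    h4 (s1.trans e1) (s2.trans e2) (s3.trans e3) (s4.trans e4)
  simp only [s1, s2, s3, s4, P₁, N₁, P₂, N₂, Multiset.map_eq_zero, val_eq_zero,
    filter_eq_empty_iff, not_lt] at z1 z2 z3 z4
  exact ⟨fun p hp => le_antisymm (z1 hp) (z2 hp), fun p hp => le_antisymm (z3 hp) (z4 hp)⟩

theorem StronglyIrreducible.eq_zero_of_sum_mul_sub_sum_mul_eq (hSI : π.StronglyIrreducible)
    {yT yB : ℕ → ℝ} (hyT : ∀ k, 0 ≤ yT k) (hyB : ∀ k, 0 ≤ yB k) {c₀ c₁ : ℝ}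
    (hy : ∀ τ : A → ℝ,
      ∑ k ∈ Icc 1 (π.l - 1), yT k * π.topSumR τ k - ∑ k ∈ Icc 1 (π.m - 1), yB k * π.botSumR τ k =
        c₀ * π.topSumR τ π.l + c₁ * π.botSumR τ π.m) :
    (∀ k ∈ Icc 1 (π.l - 1), yT k = 0) ∧ ∀ k ∈ Icc 1 (π.m - 1), yB k = 0 := by
  set g : ℕ → ℝ := fun p => ∑ k ∈ Icc p (π.l - 1), yT k - c₀
  set h : ℕ → ℝ := fun p => ∑ k ∈ Icc (p - π.l) (π.m - 1), yB k + c₁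
  have hg : Antitone g := (antitone_sum_Icc hyT _).add_const _
  have hh : Antitone h := ((antitone_sum_Icc hyB _).comp_monotone
    fun _ _ hpq => Nat.sub_le_sub_right hpq _).add_const _
  obtain ⟨hg0, hh0⟩ := hSI.eq_zero_of_antitone hg hh fun τ => by
    have := hy τ
    have htop := sum_Icc_mul_sum_Ioc_eq_sum_Ioc_sum_Icc_mul yT (fun p => τ (π.p p)) 0
      (Nat.sub_le π.l 1)
    have hbot := sum_Icc_mul_sum_Ioc_eq_sum_Ioc_sum_Icc_mul yB (fun p => τ (π.p p)) π.l
      (Nat.sub_le π.m 1)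
    simp only [zero_add, Nat.sub_zero] at htop
    simp only [topSumR_eq_sum_Ioc, botSumR_eq_sum_Ioc] at this
    simp only [g, h, sub_mul, add_mul, sum_sub_distrib, sum_add_distrib, ← mul_sum, size]
    linarith
  refine ⟨fun k hk => ?_, fun k hk => ?_⟩ <;> rw [mem_Icc] at hk
  · have := sum_Icc_sub_sum_Icc_add_one yT hk.2
    have h1 := hg0 k (mem_Ioc.2 ⟨hk.1, by omega⟩)
    have h2 := hg0 (k + 1) (mem_Ioc.2 ⟨by omega, by omega⟩)
    simp only [g] at h1 h2
    linarith
  · have := sum_Icc_sub_sum_Icc_add_one yB hk.2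
    have h1 := hh0 (π.l + k) (mem_Ioc.2 ⟨by omega, by simp only [size]; omega⟩)
    have h2 := hh0 (π.l + (k + 1)) (mem_Ioc.2 ⟨by omega, by simp only [size]; omega⟩)
    simp only [h, Nat.add_sub_cancel_left] at h1 h2
    linarith

theorem StronglyIrreducible.exists_isStrictPseudoSusp (hSI : π.StronglyIrreducible) :
    ∃ τ, π.IsStrictPseudoSusp τ := by
  by_contra hno
  obtain ⟨y, hy0, ⟨i, hi, hyi⟩, hspan⟩ := exists_nonneg_sum_smul_mem_span_of_not_exists_pos
    ((Icc 1 (π.l - 1)).disjSum (Icc 1 (π.m - 1)))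
    (Sum.elim (fun k => π.sumₗ (Ioc 0 k)) fun k => -π.sumₗ (Ioc π.l (π.l + k)))
    ![π.sumₗ (Ioc 0 π.l), π.sumₗ (Ioc π.l (π.l + π.m))] <| by
      rintro ⟨τ, hL, hpos⟩
      refine hno ⟨τ, isStrictPseudoSusp_iff.2 ⟨fun k h1 hk => ?_, fun k h1 hk => ?_, ?_, ?_⟩⟩
      · simpa [topSumR_eq_sum_Ioc] using hpos (.inl k) (by simp [h1, hk])
      · simpa [botSumR_eq_sum_Ioc] using hpos (.inr k) (by simp [h1, hk])
      · simpa [topSumR_eq_sum_Ioc] using hL 0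
      · simpa [botSumR_eq_sum_Ioc] using hL 1
  obtain ⟨c, hc⟩ := (Submodule.mem_span_range_iff_exists_fun ℝ).1 hspan
  obtain ⟨hT, hB⟩ := hSI.eq_zero_of_sum_mul_sub_sum_mul_eq (yT := fun k => y (.inl k))
    (yB := fun k => y (.inr k)) (fun _ => hy0 _) (fun _ => hy0 _) (c₀ := c 0) (c₁ := c 1)
    fun τ => by
      have := LinearMap.congr_fun hc τ
      simp only [Fin.sum_univ_two, LinearMap.add_apply, LinearMap.smul_apply,
        LinearMap.sum_apply, sum_disjSum, Sum.elim_inl, Sum.elim_inr, smul_eq_mul, sumₗ_apply,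
        Matrix.cons_val_zero, Matrix.cons_val_one, LinearMap.neg_apply, mul_neg,
        sum_neg_distrib] at this
      simp only [topSumR_eq_sum_Ioc, botSumR_eq_sum_Ioc]
      linarith
  rcases mem_disjSum.1 hi with ⟨k, hk, rfl⟩ | ⟨k, hk, rfl⟩
  exacts [hyi (hT k hk), hyi (hB k hk)]

end GenPerm

/-- A generalized permutation `π` satisfying the convention admits a
suspension data `ζ` with `Im (Σ_{i=1}^{l} ζ_{π(i)}) = 0` if and only if `π` is strongly
irreducible. -/
theorem suspension_im_zero_iff_stronglyIrreducible {A : Type*} [DecidableEq A]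
    (π : GenPerm A) (hconv : π.Convention) :
    (∃ ζ : A → ℂ, π.IsSuspension ζ ∧ (π.topSum ζ π.l).im = 0) ↔ π.StronglyIrreducible :=
  ⟨fun ⟨_, hζ, him⟩ => (hζ.isStrictPseudoSusp_im him).stronglyIrreducible hconv,
    fun hSI => hSI.exists_isStrictPseudoSusp.elim fun _ hτ => hτ.exists_isSuspension hconv⟩
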